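/- arXiv:2009.13486 — 4 statements merged into one kernel-verified Lean document; each statement's English description precedes it below -/
import Mathlib

section
/- Writing the dot action w·λ of each Kostant representative w ∈ W^{P₁} as a₁(λ,w)·(α₁/2) + b₁(λ,w)·(γ₂/2) for λ = m₁γ₁ + m₂γ₂, one has: a₁ and b₁ are given by (m₁, m₁+2m₂), (m₁+3m₂+3, m₁+m₂-1), (2m₁+3m₂+4, m₂-2), (2m₁+3m₂+4, -m₂-4), (m₁+3m₂+3, -m₁-m₂-5), (m₁, -m₁-2m₂-6) for w = 1, s₂, s₂s₁, s₂s₁s₂, s₂s₁s₂s₁, s₂s₁s₂s₁s₂ respectively. -/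
namespace G2

/-- The weight/root lattice of G₂ in coordinates: `(c₁, c₂)` represents `c₁α₁ + c₂α₂`,
where `α₁` is the short simple root and `α₂` is the long simple root. -/
def α1 : ℚ × ℚ := (1, 0)
def α2 : ℚ × ℚ := (0, 1)

/-- The simple reflection `s₁`: `s₁(α₁) = -α₁`, `s₁(α₂) = 3α₁ + α₂`. -/
def s1fun : ℚ × ℚ → ℚ × ℚ := fun p => (-p.1 + 3 * p.2, p.2)
/-- The simple reflection `s₂`: `s₂(α₁) = α₁ + α₂`, `s₂(α₂) = -α₂`. -/
def s2fun : ℚ × ℚ → ℚ × ℚ := fun p => (p.1, p.1 - p.2)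

lemma s1_invol : Function.Involutive s1fun := by
  intro p; rw [Prod.ext_iff]; constructor <;> simp [s1fun]

lemma s2_invol : Function.Involutive s2fun := by
  intro p; rw [Prod.ext_iff]; constructor <;> simp [s2fun]

/-- The simple reflections as permutations of the weight space. -/
def σ1 : Equiv.Perm (ℚ × ℚ) := Function.Involutive.toPerm s1fun s1_invol
def σ2 : Equiv.Perm (ℚ × ℚ) := Function.Involutive.toPerm s2fun s2_invol

/-- The Weyl group of G₂, generated by the two simple reflections. -/
def W : Subgroup (Equiv.Perm (ℚ × ℚ)) := Subgroup.closure {σ1, σ2}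

/-- Word length with respect to the simple reflections `s₁`, `s₂`. -/
noncomputable def len (w : Equiv.Perm (ℚ × ℚ)) : ℕ :=
  sInf {n | ∃ l : List (Equiv.Perm (ℚ × ℚ)),
    l.length = n ∧ (∀ x ∈ l, x = σ1 ∨ x = σ2) ∧ l.prod = w}

/-- `ρ = 5α₁ + 3α₂`, the half sum of positive roots. -/
def ρv : ℚ × ℚ := (5, 3)
/-- The fundamental weight `γ₁ = 2α₁ + α₂`. -/
def γ1 : ℚ × ℚ := (2, 1)
/-- The fundamental weight `γ₂ = 3α₁ + 2α₂`. -/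
def γ2 : ℚ × ℚ := (3, 2)

/-- The dot action `w · λ = w(λ + ρ) - ρ`. -/
def dot (w : Equiv.Perm (ℚ × ℚ)) (μ : ℚ × ℚ) : ℚ × ℚ := w (μ + ρv) - ρv

/-- The positive roots of G₂. -/
def Φplus : Set (ℚ × ℚ) :=
  {α1, α2, α1 + α2, (2 : ℚ) • α1 + α2, (3 : ℚ) • α1 + α2, (3 : ℚ) • α1 + (2 : ℚ) • α2}

/-- The negative roots of G₂. -/
def Φminus : Set (ℚ × ℚ) := (fun p => -p) '' Φplus

/-- `γ^{M₁} = α₁/2`. -/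
def γM1 : ℚ × ℚ := (1/2, 0)
/-- `κ^{M₁} = γ₂/2`. -/
def κM1 : ℚ × ℚ := (3/2, 1)
/-- `γ^{M₂} = α₂/2`. -/
def γM2 : ℚ × ℚ := (0, 1/2)
/-- `κ^{M₂} = γ₁/2`. -/
def κM2 : ℚ × ℚ := (1, 1/2)

/-- Kostant representatives for the maximal parabolic `P₁`. -/
def WP1 : Set (Equiv.Perm (ℚ × ℚ)) :=
  {1, σ2, σ2 * σ1, σ2 * σ1 * σ2, σ2 * σ1 * σ2 * σ1, σ2 * σ1 * σ2 * σ1 * σ2}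

/-- Kostant representatives for the maximal parabolic `P₂`. -/
def WP2 : Set (Equiv.Perm (ℚ × ℚ)) :=
  {1, σ1, σ1 * σ2, σ1 * σ2 * σ1, σ1 * σ2 * σ1 * σ2, σ1 * σ2 * σ1 * σ2 * σ1}

/-- The coefficients `a₁(λ,w), b₁(λ,w)` with `w·λ = a₁ γ^{M₁} + b₁ κ^{M₁}` for the six
Kostant representatives of `P₁` and `λ = m₁γ₁ + m₂γ₂`. -/
theorem g2_coefficients_P1 (m₁ m₂ : ℤ) :
    dot 1 ((m₁ : ℚ) • γ1 + (m₂ : ℚ) • γ2)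
      = (m₁ : ℚ) • γM1 + ((m₁ : ℚ) + 2 * m₂) • κM1 ∧
    dot σ2 ((m₁ : ℚ) • γ1 + (m₂ : ℚ) • γ2)
      = ((m₁ : ℚ) + 3 * m₂ + 3) • γM1 + ((m₁ : ℚ) + m₂ - 1) • κM1 ∧
    dot (σ2 * σ1) ((m₁ : ℚ) • γ1 + (m₂ : ℚ) • γ2)
      = (2 * (m₁ : ℚ) + 3 * m₂ + 4) • γM1 + ((m₂ : ℚ) - 2) • κM1 ∧
    dot (σ2 * σ1 * σ2) ((m₁ : ℚ) • γ1 + (m₂ : ℚ) • γ2)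
      = (2 * (m₁ : ℚ) + 3 * m₂ + 4) • γM1 + (-(m₂ : ℚ) - 4) • κM1 ∧
    dot (σ2 * σ1 * σ2 * σ1) ((m₁ : ℚ) • γ1 + (m₂ : ℚ) • γ2)
      = ((m₁ : ℚ) + 3 * m₂ + 3) • γM1 + (-(m₁ : ℚ) - m₂ - 5) • κM1 ∧
    dot (σ2 * σ1 * σ2 * σ1 * σ2) ((m₁ : ℚ) • γ1 + (m₂ : ℚ) • γ2)
      = (m₁ : ℚ) • γM1 + (-(m₁ : ℚ) - 2 * m₂ - 6) • κM1 := by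
  refine ⟨?_, ?_, ?_, ?_, ?_, ?_⟩ <;>
    simp [dot, σ1, σ2, s1fun, s2fun, Function.Involutive.toPerm, γ1, γ2, γM1, κM1, ρv,
      Prod.ext_iff, Prod.smul_def, Equiv.mul_def] <;> constructor <;> ring

end G2
end

section
/- For the maximal parabolic P₁ of G₂ and the involution w ↦ w' = s₁ w w₀ on W^{P₁}, the coefficients in the decomposition w·λ = a₁(λ,w)γ^{M₁} + b₁(λ,w)κ^{M₁} satisfy a₁(λ,w') = a₁(λ,w) and b₁(λ,w) + b₁(λ,w') = -6, for every weight λ = m₁γ₁ + m₂γ₂. -/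
namespace G2

lemma σ1_apply (p : ℚ × ℚ) : σ1 p = (-p.1 + 3 * p.2, p.2) := rfl
lemma σ2_apply (p : ℚ × ℚ) : σ2 p = (p.1, p.1 - p.2) := rfl

set_option maxHeartbeats 1000000 in
/-- For the involution `w ↦ w' = s₁ w w₀` on `W^{P₁}` and `λ = m₁γ₁ + m₂γ₂`:
`a₁(λ,w') = a₁(λ,w)` and `b₁(λ,w) + b₁(λ,w') = -6`. -/
theorem g2_involution_coefficients_P1 (m₁ m₂ : ℤ) :
    ∀ w ∈ WP1, ∀ a b a' b' : ℚ,
      dot w ((m₁ : ℚ) • γ1 + (m₂ : ℚ) • γ2) = a • γM1 + b • κM1 →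
      dot (σ1 * w * (σ1 * σ2) ^ 3) ((m₁ : ℚ) • γ1 + (m₂ : ℚ) • γ2) = a' • γM1 + b' • κM1 →
      a' = a ∧ b + b' = -6 := by
  intro w hw a b a' b' h1 h2
  simp only [WP1, Set.mem_insert_iff, Set.mem_singleton_iff] at hw
  rcases hw with rfl|rfl|rfl|rfl|rfl|rfl <;>
  · simp only [dot, pow_succ, pow_zero, one_mul, Equiv.Perm.mul_apply,
      σ1_apply, σ2_apply, Equiv.Perm.one_apply,
      γ1, γ2, γM1, κM1, ρv, Prod.mk_add_mk, Prod.smul_mk, Prod.ext_iff,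
      Prod.fst_add, Prod.snd_add, Prod.fst_sub, Prod.snd_sub, Prod.mk_sub_mk,
      smul_eq_mul] at h1 h2
    obtain ⟨h1a, h1b⟩ := h1
    obtain ⟨h2a, h2b⟩ := h2
    constructor <;> linarith

end G2
end

section
/- For the maximal parabolic P₂ of G₂ and the involution w ↦ w' = s₂ w w₀ on W^{P₂}, the coefficients in the decomposition w·λ = a₂(λ,w)γ^{M₂} + b₂(λ,w)κ^{M₂} satisfy a₂(λ,w') = a₂(λ,w) and b₂(λ,w) + b₂(λ,w') = -10, for every weight λ = m₁γ₁ + m₂γ₂. -/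
namespace G2

lemma w0_apply (p : ℚ × ℚ) : ((σ1 * σ2) ^ 3) p = -p := by
  simp only [pow_succ, pow_zero, one_mul, Equiv.Perm.mul_apply, σ1_apply, σ2_apply,
    Prod.ext_iff, Prod.fst_neg, Prod.snd_neg]
  constructor <;> ring

/-- For the involution `w ↦ w' = s₂ w w₀` on `W^{P₂}` and `λ = m₁γ₁ + m₂γ₂`:
`a₂(λ,w') = a₂(λ,w)` and `b₂(λ,w) + b₂(λ,w') = -10`. -/
theorem g2_involution_coefficients_P2 (m₁ m₂ : ℤ) :
    ∀ w ∈ WP2, ∀ a b a' b' : ℚ,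
      dot w ((m₁ : ℚ) • γ1 + (m₂ : ℚ) • γ2) = a • γM2 + b • κM2 →
      dot (σ2 * w * (σ1 * σ2) ^ 3) ((m₁ : ℚ) • γ1 + (m₂ : ℚ) • γ2) = a' • γM2 + b' • κM2 →
      a' = a ∧ b + b' = -10 := by

  intro w hw a b a' b' h h'
  simp only [WP2, Set.mem_insert_iff, Set.mem_singleton_iff] at hw
  rcases hw with rfl | rfl | rfl | rfl | rfl | rfl <;>
  · simp only [dot, Equiv.Perm.mul_apply, Equiv.Perm.one_apply, w0_apply,
      σ1_apply, σ2_apply, γ1, γ2, γM2, κM2, ρv, Prod.ext_iff, Prod.smul_fst, Prod.smul_snd,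
      Prod.fst_add, Prod.snd_add, Prod.fst_sub, Prod.snd_sub, Prod.fst_neg, Prod.snd_neg,
      smul_eq_mul] at h h'
    obtain ⟨h1, h2⟩ := h
    obtain ⟨h3, h4⟩ := h'
    constructor <;> linarith

end G2
end

section
/- If λ = m₁γ₁ + m₂γ₂ with both m₁ and m₂ odd, then for every element w of the Weyl group of G₂, writing w·λ = w(λ+ρ) − ρ = m₁'γ₁ + m₂'γ₂ in the fundamental weight basis, at least one of m₁', m₂' is odd. -/
namespace G2

/-!
The fundamental weights of G₂ lie in the root lattice `L = ℤα₁ ⊕ ℤα₂`, so for `m₁, m₂` odd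
`λ + ρ = (m₁ + 1)γ₁ + (m₂ + 1)γ₂` lies in `2L`. The simple reflections are integral, hence the
Weyl group preserves `2L`, and so `w·λ + ρ = w(λ + ρ) ∈ 2L`. Since `γ₁, γ₂` is a `ℤ`-basis of `L`,
`aγ₁ + bγ₂ + ρ ∈ 2L` forces `a` and `b` to be odd integers.
-/

open scoped Pointwise

def scaledLattice (k : ℤ) : Set (ℚ × ℚ) := {v | ∃ x y : ℤ, v = ((k : ℚ) * x, (k : ℚ) * y)}

lemma mem_stabilizer_of_involutive {α : Type*} {f : Equiv.Perm α} {s : Set α}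
    (hf : Function.Involutive f) (hs : Set.MapsTo f s s) :
    f ∈ MulAction.stabilizer (Equiv.Perm α) s := by
  refine (Set.Subset.antisymm ?_ fun v hv => ?_ : f • s = s)
  · rintro _ ⟨v, hv, rfl⟩
    exact hs hv
  · exact ⟨f v, hs hv, hf v⟩

lemma σ1_apply_s18 (v : ℚ × ℚ) : σ1 v = (-v.1 + 3 * v.2, v.2) := rfl

lemma σ2_apply_s18 (v : ℚ × ℚ) : σ2 v = (v.1, v.1 - v.2) := rfl

lemma mapsTo_σ1_scaledLattice (k : ℤ) : Set.MapsTo σ1 (scaledLattice k) (scaledLattice k) := by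
  rintro _ ⟨x, y, rfl⟩
  exact ⟨-x + 3 * y, y, by rw [σ1_apply_s18]; push_cast; ring_nf⟩

lemma mapsTo_σ2_scaledLattice (k : ℤ) : Set.MapsTo σ2 (scaledLattice k) (scaledLattice k) := by
  rintro _ ⟨x, y, rfl⟩
  exact ⟨x, x - y, by rw [σ2_apply_s18]; push_cast; ring_nf⟩

lemma W_le_stabilizer_scaledLattice (k : ℤ) :
    W ≤ MulAction.stabilizer (Equiv.Perm (ℚ × ℚ)) (scaledLattice k) := by
  rw [W, Subgroup.closure_le, Set.insert_subset_iff, Set.singleton_subset_iff]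
  exact ⟨mem_stabilizer_of_involutive s1_invol (mapsTo_σ1_scaledLattice k),
    mem_stabilizer_of_involutive s2_invol (mapsTo_σ2_scaledLattice k)⟩

lemma apply_mem_scaledLattice {w : Equiv.Perm (ℚ × ℚ)} (hw : w ∈ W) (k : ℤ) {v : ℚ × ℚ}
    (hv : v ∈ scaledLattice k) : w v ∈ scaledLattice k :=
  (W_le_stabilizer_scaledLattice k hw : w • scaledLattice k = _) ▸ Set.smul_mem_smul_set hv

lemma add_ρv_mem_scaledLattice_two_iff (a b : ℚ) :
    a • γ1 + b • γ2 + ρv ∈ scaledLattice 2 ↔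
      (∃ k : ℤ, a = 2 * k + 1) ∧ (∃ k : ℤ, b = 2 * k + 1) := by
  simp only [scaledLattice, Set.mem_ofPred_eq, γ1, γ2, ρv, Prod.smul_mk, Prod.mk_add_mk,
    Prod.mk.injEq, smul_eq_mul, Int.cast_ofNat]
  constructor
  · rintro ⟨x, y, hx, hy⟩
    exact ⟨⟨2 * x - 3 * y - 1, by push_cast; linarith⟩, ⟨-x + 2 * y - 1, by push_cast; linarith⟩⟩
  · rintro ⟨⟨k, rfl⟩, ⟨l, rfl⟩⟩
    exact ⟨2 * k + 3 * l + 5, k + 2 * l + 3, by push_cast; ring, by push_cast; ring⟩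

/-- If `λ = m₁γ₁ + m₂γ₂` with `m₁, m₂` both odd, then for every Weyl group element `w`,
writing `w·λ = m₁'γ₁ + m₂'γ₂`, at least one of `m₁', m₂'` is odd. -/
theorem g2_parity_odd_odd (m₁ m₂ : ℤ) (h₁ : Odd m₁) (h₂ : Odd m₂) :
    ∀ w ∈ W, ∀ a b : ℚ,
      dot w ((m₁ : ℚ) • γ1 + (m₂ : ℚ) • γ2) = a • γ1 + b • γ2 →
      (∃ k : ℤ, a = 2 * k + 1) ∨ (∃ k : ℤ, b = 2 * k + 1) := by
  intro w hw a b hdot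
  have cast_odd {m : ℤ} (hm : Odd m) : ∃ k : ℤ, (m : ℚ) = 2 * k + 1 := by
    obtain ⟨k, rfl⟩ := hm
    exact ⟨k, by push_cast; ring⟩
  have hsrc := (add_ρv_mem_scaledLattice_two_iff _ _).mpr ⟨cast_odd h₁, cast_odd h₂⟩
  have hdot_shift : w ((m₁ : ℚ) • γ1 + (m₂ : ℚ) • γ2 + ρv) = a • γ1 + b • γ2 + ρv := by
    rw [← hdot, dot, sub_add_cancel]
  have hdst := apply_mem_scaledLattice hw 2 hsrc
  rw [hdot_shift] at hdst
  exact Or.inl ((add_ρv_mem_scaledLattice_two_iff a b).mp hdst).1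

end G2
end
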